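/- arXiv:2309.05770 — 3 statements merged into one kernel-verified Lean document; each statement's English description precedes it below -/
import Mathlib

section
/- Let w ∈ S_n be a 312-avoiding permutation and define h_i = max{w(k) : k ≤ i} for each i ∈ [n]. Then the number of inversions of w equals the sum over i ∈ [n] of (h_i − i). -/
/-- `w` avoids the pattern 312: there are no indices `i < j < k` with `w j < w k < w i`. -/
def Avoids312 {n : ℕ} (w : Equiv.Perm (Fin n)) : Prop :=
  ¬ ∃ i j k : Fin n, i < j ∧ j < k ∧ w j < w k ∧ w k < w i

/-- The number of inversions (Coxeter length) of a permutation. -/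
def invCount {n : ℕ} (w : Equiv.Perm (Fin n)) : ℕ :=
  (Finset.univ.filter (fun x : Fin n × Fin n => x.1 < x.2 ∧ w x.2 < w x.1)).card

/-- `maxTo w i = max {w k : k ≤ i}` (as a natural number, using 0-indexed values). -/
def maxTo {n : ℕ} (w : Equiv.Perm (Fin n)) (i : Fin n) : ℕ :=
  (Finset.univ.filter (fun k : Fin n => k ≤ i)).sup (fun k => (w k).val)

lemma le_maxTo {n : ℕ} (w : Equiv.Perm (Fin n)) {i k : Fin n} (hk : k ≤ i) :
    (w k).val ≤ maxTo w i := by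
  exact Finset.le_sup (f := fun k => (w k).val) (by simp [hk])

lemma exists_maxTo {n : ℕ} (w : Equiv.Perm (Fin n)) (i : Fin n) :
    ∃ a : Fin n, a ≤ i ∧ (w a).val = maxTo w i := by
  obtain ⟨a, ha, h⟩ := Finset.exists_mem_eq_sup
    (Finset.univ.filter (fun k : Fin n => k ≤ i)) ⟨i, by simp⟩ (fun k => (w k).val)
  exact ⟨a, by simpa using ha, h.symm⟩

lemma maxTo_lt {n : ℕ} (w : Equiv.Perm (Fin n)) (i : Fin n) : maxTo w i < n := by
  obtain ⟨a, _, ha⟩ := exists_maxTo w i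
  exact ha ▸ (w a).isLt

lemma key {n : ℕ} {w : Equiv.Perm (Fin n)} (h : Avoids312 w) {i b : Fin n} (hib : i < b) :
    (w b).val < maxTo w i ↔ w b < w i := by
  constructor
  · intro hlt
    by_contra hnb
    have hne : w b ≠ w i := fun e => (ne_of_gt hib) (w.injective e)
    have hib' : w i < w b := lt_of_le_of_ne (not_lt.mp hnb) (Ne.symm hne)
    obtain ⟨a, hai, hwa⟩ := exists_maxTo w i
    have hba : w b < w a := by
      rw [Fin.lt_def]; omega
    have hA : a < i := by
      rcases lt_or_eq_of_le hai with h' | h'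
      · exact h'
      · exfalso; subst h'; exact absurd hba (not_lt.mpr (le_of_lt hib'))
    exact h ⟨a, i, b, hA, hib, hib', hba⟩
  · intro hlt
    exact lt_of_lt_of_le hlt (le_maxTo w le_rfl)

lemma card_split {n : ℕ} (w : Equiv.Perm (Fin n)) (i : Fin n) :
    maxTo w i + 1 =
      (i.val + 1) + (Finset.univ.filter fun b : Fin n => i < b ∧ (w b).val < maxTo w i).card := by
  have hmn := maxTo_lt w i
  -- card of values ≤ maxTo
  have h1 : (Finset.univ.filter fun v : Fin n => v.val ≤ maxTo w i).card = maxTo w i + 1 := by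
    have : (Finset.univ.filter fun v : Fin n => v.val ≤ maxTo w i) = Finset.Iic ⟨_, hmn⟩ := by
      ext v; simp [Fin.le_def]
    rw [this, Fin.card_Iic]
  -- transport through w
  have h2 : (Finset.univ.filter fun k : Fin n => (w k).val ≤ maxTo w i).card
      = maxTo w i + 1 := by
    rw [← h1]
    apply Finset.card_bij (fun k _ => w k)
    · intro a ha; simp at ha ⊢; exact ha
    · intro a _ b _ hab; exact w.injective hab
    · intro v hv; exact ⟨w.symm v, by simpa using hv, by simp⟩
  -- split the filter
  have h3 : (Finset.univ.filter fun k : Fin n => (w k).val ≤ maxTo w i)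
      = (Finset.univ.filter fun k : Fin n => k ≤ i)
        ∪ (Finset.univ.filter fun b : Fin n => i < b ∧ (w b).val < maxTo w i) := by
    ext k
    simp only [Finset.mem_filter, Finset.mem_union, Finset.mem_univ, true_and]
    constructor
    · intro hk
      rcases le_or_gt k i with hki | hki
      · exact Or.inl hki
      · refine Or.inr ⟨hki, lt_of_le_of_ne hk ?_⟩
        intro he
        obtain ⟨a, hai, hwa⟩ := exists_maxTo w i
        have : k = a := w.injective (Fin.val_injective (he.trans hwa.symm))
        subst this
        exact absurd hai (not_le.mpr hki)
    · rintro (hk | ⟨_, hk⟩)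
      · exact le_maxTo w hk
      · exact le_of_lt hk
  have hdisj : Disjoint (Finset.univ.filter fun k : Fin n => k ≤ i)
      (Finset.univ.filter fun b : Fin n => i < b ∧ (w b).val < maxTo w i) := by
    rw [Finset.disjoint_left]
    intro k hk hk'
    simp at hk hk'
    exact absurd hk (not_le.mpr hk'.1)
  have h4 : (Finset.univ.filter fun k : Fin n => k ≤ i).card = i.val + 1 := by
    have : (Finset.univ.filter fun k : Fin n => k ≤ i) = Finset.Iic i := by ext v; simp
    rw [this, Fin.card_Iic]
  rw [← h2, h3, Finset.card_union_of_disjoint hdisj, h4]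

/-- For a 312-avoiding permutation `w`, with `h i = max {w k : k ≤ i}`, the number of
inversions of `w` equals `∑ i (h i - i)` (stated in 0-indexed form over `Fin n`). -/
theorem invCount_eq_sum_max_sub_of_avoids312 {n : ℕ} (w : Equiv.Perm (Fin n))
    (h : Avoids312 w) :
    (invCount w : ℤ) = ∑ i : Fin n, ((maxTo w i : ℤ) - (i.val : ℤ)) := by
  have hsum : invCount w
      = ∑ i : Fin n, (Finset.univ.filter fun b : Fin n => i < b ∧ (w b).val < maxTo w i).card := by
    have : ∀ i : Fin n, (Finset.univ.filter fun b : Fin n => i < b ∧ (w b).val < maxTo w i)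
        = (Finset.univ.filter fun b : Fin n => i < b ∧ w b < w i) := by
      intro i
      ext b
      simp only [Finset.mem_filter, Finset.mem_univ, true_and]
      exact and_congr_right fun hib => key h hib
    simp_rw [this]
    rw [invCount, Finset.card_filter]
    rw [Fintype.sum_prod_type]
    congr 1
    ext i
    rw [Finset.card_filter]
  have hi : ∀ i : Fin n,
      ((Finset.univ.filter fun b : Fin n => i < b ∧ (w b).val < maxTo w i).card : ℤ)
        = (maxTo w i : ℤ) - (i.val : ℤ) := by
    intro i
    have := card_split w i
    omega
  rw [hsum]
  push_cast
  exact Finset.sum_congr rfl fun i _ => hi i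
end

section
/- For a 312-avoiding permutation w ∈ S_n with w(k) = n, and any index i ≥ k, the number of inversions of w at position i (i.e., |{j > i : w(j) < w(i)}|) equals n − i. -/
/-- For a 312-avoiding permutation `w ∈ S_n` with `w k = n` (the largest value, i.e. with
0-indexing, `(w k).val = n - 1`), and any index `i ≥ k`, the number of inversions of `w` at
position `i`, namely `|{j > i : w j < w i}|`, is `n - i` (with 1-indexing), i.e.
`n - 1 - i.val` with 0-indexing. -/
theorem inv_at_eq_of_avoids312 {n : ℕ} (w : Equiv.Perm (Fin n)) (h : Avoids312 w)
    (k : Fin n) (hk : (w k).val = n - 1) (i : Fin n) (hik : k ≤ i) :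
    (Finset.univ.filter (fun j : Fin n => i < j ∧ w j < w i)).card = n - 1 - i.val := by
  have key : ∀ j : Fin n, i < j → w j < w i := by
    intro j hij
    have hjk : k < j := lt_of_le_of_lt hik hij
    have hwjk : w j < w k := by
      refine lt_of_le_of_ne ?_ (fun e => (ne_of_gt hjk) (w.injective e))
      have : (w j).val ≤ n - 1 := Nat.le_sub_one_of_lt (w j).isLt
      omega
    rcases eq_or_lt_of_le hik with rfl | hki
    · exact hwjk
    · by_contra hwij
      push_neg at hwij
      have hwij' : w i < w j :=
        lt_of_le_of_ne hwij (fun e => (ne_of_gt hij) (w.injective e.symm))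
      exact h ⟨k, i, j, hki, hij, hwij', hwjk⟩
  have heq : (Finset.univ.filter (fun j : Fin n => i < j ∧ w j < w i)) = Finset.Ioi i := by
    ext j
    simp only [Finset.mem_filter, Finset.mem_univ, true_and, Finset.mem_Ioi]
    exact ⟨fun h => h.1, fun h => ⟨h, key j h⟩⟩
  rw [heq, Fin.card_Ioi]
end

section
/- Let p ≥ q ≥ 1, n = p + q, and let w ∈ S_q be 231-avoiding. Let m(w) be defined by m(w)_i = max{w^{-1}(k)+p : k ≤ i} for i ≤ q and m(w)_i = n for i > q. Then the sum over i ∈ [n] of (m(w)_i − i) equals ℓ(w) + pq + p(p−1)/2, where ℓ(w) is the number of inversions of w. -/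
/-- `w` avoids the pattern 231: there are no indices `i < j < k` with `w k < w i < w j`. -/
def Avoids231 {q : ℕ} (w : Equiv.Perm (Fin q)) : Prop :=
  ¬ ∃ i j k : Fin q, i < j ∧ j < k ∧ w k < w i ∧ w i < w j

/-- The Hessenberg vector `m(w)` associated to `w ∈ S_q` and `p`: with 1-indexed values,
`m(w)_i = max {w⁻¹(k) + p : k ≤ i}` for `i ≤ q` and `m(w)_i = n` for `i > q`.
Here indices `i : Fin n` are 0-indexed and the values of `w⁻¹` are converted to be
1-indexed via `(w⁻¹ k).val + 1`. -/
def mvec (p q n : ℕ) (w : Equiv.Perm (Fin q)) (i : Fin n) : ℕ :=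
  if (i : ℕ) < q then
    (Finset.univ.filter (fun k : Fin q => (k : ℕ) ≤ (i : ℕ))).sup
      (fun k => (w⁻¹ k).val + 1 + p)
  else n

namespace SumMvecAux

variable {q : ℕ} (w : Equiv.Perm (Fin q))

/-- `max {w⁻¹ k : k ≤ j}` (0-indexed). -/
def Mnat (j : Fin q) : ℕ :=
  (Finset.univ.filter (fun k : Fin q => (k : ℕ) ≤ (j : ℕ))).sup (fun k => (w⁻¹ k).val)

lemma exists_Mnat (j : Fin q) :
    ∃ k : Fin q, (k : ℕ) ≤ (j : ℕ) ∧ Mnat w j = (w⁻¹ k).val := by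
  obtain ⟨k, hk, he⟩ :=
    Finset.exists_mem_eq_sup (Finset.univ.filter (fun k : Fin q => (k : ℕ) ≤ (j : ℕ)))
      ⟨j, Finset.mem_filter.mpr ⟨Finset.mem_univ j, le_refl ((j : ℕ))⟩⟩
      (fun k : Fin q => (w⁻¹ k).val)
  exact ⟨k, (Finset.mem_filter.mp hk).2, he⟩

lemma Mnat_lt (j : Fin q) : Mnat w j < q := by
  obtain ⟨k, _, he⟩ := exists_Mnat w j
  rw [he]; exact (w⁻¹ k).isLt

lemma le_Mnat {k j : Fin q} (h : (k : ℕ) ≤ (j : ℕ)) : (w⁻¹ k).val ≤ Mnat w j := by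
  unfold Mnat
  exact Finset.le_sup (f := fun k : Fin q => (w⁻¹ k).val)
    (Finset.mem_filter.mpr ⟨Finset.mem_univ k, h⟩)

lemma card_le_val (m : ℕ) (hm : m < q) :
    (Finset.univ.filter (fun v : Fin q => (v : ℕ) ≤ m)).card = m + 1 := by
  have h : Finset.univ.filter (fun v : Fin q => (v : ℕ) ≤ m)
      = Finset.Iic (⟨m, hm⟩ : Fin q) := by
    ext v; simp [Fin.le_def]
  rw [h, Fin.card_Iic]

lemma card_A (j : Fin q) :
    (Finset.univ.filter (fun b : Fin q => ((w⁻¹ b : Fin q) : ℕ) ≤ Mnat w j)).card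
      = Mnat w j + 1 := by
  rw [← card_le_val (q := q) (Mnat w j) (Mnat_lt w j)]
  apply Finset.card_nbij' (fun b => w⁻¹ b) (fun v => w v)
  · intro b hb; simpa using (by simpa using hb : ((w⁻¹ b : Fin q) : ℕ) ≤ Mnat w j)
  · intro v hv; simp only [Finset.mem_filter, Finset.mem_univ, true_and] at hv ⊢
    simpa using hv
  · intro b _; simp
  · intro v _; simp

lemma j_le_Mnat (j : Fin q) : (j : ℕ) ≤ Mnat w j := by
  have h1 : (Finset.univ.filter (fun k : Fin q => (k : ℕ) ≤ (j : ℕ))).card = (j : ℕ) + 1 :=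
    card_le_val _ j.isLt
  have h2 := card_A w j
  have h3 : (Finset.univ.filter (fun k : Fin q => (k : ℕ) ≤ (j : ℕ))).card
      ≤ (Finset.univ.filter (fun b : Fin q => ((w⁻¹ b : Fin q) : ℕ) ≤ Mnat w j)).card := by
    apply Finset.card_le_card
    intro k hk
    simp only [Finset.mem_filter, Finset.mem_univ, true_and] at hk ⊢
    exact le_Mnat w hk
  omega

lemma card_count (j : Fin q) :
    (Finset.univ.filter
      (fun b : Fin q => (j : ℕ) < (b : ℕ) ∧ ((w⁻¹ b : Fin q) : ℕ) ≤ Mnat w j)).card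
      + ((j : ℕ) + 1) = Mnat w j + 1 := by
  have hsplit : Finset.univ.filter (fun b : Fin q => ((w⁻¹ b : Fin q) : ℕ) ≤ Mnat w j)
      = Finset.univ.filter
          (fun b : Fin q => (j : ℕ) < (b : ℕ) ∧ ((w⁻¹ b : Fin q) : ℕ) ≤ Mnat w j)
        ∪ Finset.univ.filter (fun b : Fin q => (b : ℕ) ≤ (j : ℕ)) := by
    ext b
    simp only [Finset.mem_filter, Finset.mem_union, Finset.mem_univ, true_and]
    constructor
    · intro h
      rcases lt_or_ge (j : ℕ) (b : ℕ) with h' | h'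
      · exact Or.inl ⟨h', h⟩
      · exact Or.inr h'
    · rintro (⟨_, h⟩ | h)
      · exact h
      · exact le_Mnat w h
  have hdisj : Disjoint
      (Finset.univ.filter
        (fun b : Fin q => (j : ℕ) < (b : ℕ) ∧ ((w⁻¹ b : Fin q) : ℕ) ≤ Mnat w j))
      (Finset.univ.filter (fun b : Fin q => (b : ℕ) ≤ (j : ℕ))) := by
    rw [Finset.disjoint_left]
    intro b h1 h2
    simp only [Finset.mem_filter, Finset.mem_univ, true_and] at h1 h2
    omega
  have := Finset.card_union_of_disjoint hdisj
  rw [← hsplit, card_A w j, card_le_val _ j.isLt] at this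
  omega

lemma filter_eq_of_avoid (hw : Avoids231 w) (j : Fin q) :
    Finset.univ.filter
      (fun b : Fin q => (j : ℕ) < (b : ℕ) ∧ ((w⁻¹ b : Fin q) : ℕ) ≤ Mnat w j)
    = Finset.univ.filter (fun b : Fin q => j < b ∧ w⁻¹ b < w⁻¹ j) := by
  ext b
  simp only [Finset.mem_filter, Finset.mem_univ, true_and, Fin.lt_def]
  constructor
  · rintro ⟨hjb, hbM⟩
    refine ⟨hjb, ?_⟩
    by_contra hcon
    push_neg at hcon
    -- hcon : w⁻¹ j ≤ w⁻¹ b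
    have hne : w⁻¹ b ≠ w⁻¹ j := by
      intro h
      have : b = j := w⁻¹.injective h
      omega
    have hjlt : ((w⁻¹ j : Fin q) : ℕ) < ((w⁻¹ b : Fin q) : ℕ) := by
      rcases lt_or_eq_of_le hcon with h | h
      · exact h
      · exact absurd (Fin.ext h.symm) hne
    obtain ⟨k, hkj, hM⟩ := exists_Mnat w j
    have hkb : k ≠ b := by intro h; omega
    have hbM' : ((w⁻¹ b : Fin q) : ℕ) < ((w⁻¹ k : Fin q) : ℕ) := by
      rcases lt_or_eq_of_le hbM with h | h
      · omega
      · exact absurd (w⁻¹.injective (Fin.ext (h.trans hM))) hkb.symm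
    apply hw
    exact ⟨w⁻¹ j, w⁻¹ b, w⁻¹ k, by rw [Fin.lt_def]; exact hjlt,
      by rw [Fin.lt_def]; exact hbM', by
        simp only [Equiv.Perm.coe_inv, Equiv.apply_symm_apply, Fin.lt_def]
        have hkj' : (k : ℕ) < (j : ℕ) := by
          rcases lt_or_eq_of_le hkj with h | h
          · exact h
          · exfalso
            have hkeq : w⁻¹ k = w⁻¹ j := by rw [Fin.ext h]
            have : ((w⁻¹ k : Fin q) : ℕ) = ((w⁻¹ j : Fin q) : ℕ) := by rw [hkeq]
            omega
        exact hkj', by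
        simp only [Equiv.Perm.coe_inv, Equiv.apply_symm_apply, Fin.lt_def]; exact hjb⟩
  · rintro ⟨hjb, hub⟩
    exact ⟨hjb, le_trans (le_of_lt hub) (le_Mnat w (le_refl _))⟩

lemma invCount_eq_sum :
    invCount w = ∑ j : Fin q,
      (Finset.univ.filter (fun b : Fin q => j < b ∧ w⁻¹ b < w⁻¹ j)).card := by
  have h1 : invCount w = (Finset.univ.filter
      (fun y : Fin q × Fin q => y.1 < y.2 ∧ w⁻¹ y.2 < w⁻¹ y.1)).card := by
    unfold invCount
    apply Finset.card_nbij' (fun x => (w x.2, w x.1)) (fun y => (w⁻¹ y.2, w⁻¹ y.1))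
    · intro x hx
      simp only [Finset.mem_coe, Finset.mem_filter, Finset.mem_univ, true_and] at hx ⊢
      simpa using ⟨hx.2, hx.1⟩
    · intro y hy
      simp only [Finset.mem_coe, Finset.mem_filter, Finset.mem_univ, true_and] at hy ⊢
      simpa using ⟨hy.2, hy.1⟩
    · intro x _; simp
    · intro y _; simp
  rw [h1, Finset.card_filter, Fintype.sum_prod_type]
  refine Finset.sum_congr rfl fun j _ => ?_
  rw [Finset.card_filter]

lemma sup_add_const (s : Finset (Fin q)) (hs : s.Nonempty) (f : Fin q → ℕ) (c : ℕ) :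
    s.sup (fun k => f k + c) = s.sup f + c := by
  apply le_antisymm
  · exact Finset.sup_le fun k hk => Nat.add_le_add_right (Finset.le_sup hk) c
  · obtain ⟨k, hk, he⟩ := Finset.exists_mem_eq_sup s hs f
    rw [he]
    exact Finset.le_sup (f := fun k => f k + c) hk

lemma mvec_eq_of_lt (p n : ℕ) (i : Fin n) (h : (i : ℕ) < q) :
    mvec p q n w i = Mnat w ⟨(i : ℕ), h⟩ + 1 + p := by
  rw [mvec, if_pos h]
  have h1 : (Finset.univ.filter (fun k : Fin q => (k : ℕ) ≤ (i : ℕ))).Nonempty :=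
    ⟨⟨(i : ℕ), h⟩, by simp⟩
  rw [show (fun k : Fin q => (w⁻¹ k).val + 1 + p) = fun k => ((w⁻¹ k).val + 1) + p from rfl,
    sup_add_const _ h1 _ p, sup_add_const _ h1 _ 1]
  rfl

end SumMvecAux

open SumMvecAux in
/-- For `p ≥ q ≥ 1`, `n = p + q`, and a 231-avoiding `w ∈ S_q`,
`∑_{i ∈ [n]} (m(w)_i − i) = ℓ(w) + pq + p(p−1)/2`. -/
theorem sum_mvec_sub_eq (p q : ℕ) (hq1 : 1 ≤ q) (hq : q ≤ p) (w : Equiv.Perm (Fin q))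
    (hw : Avoids231 w) :
    ∑ i : Fin (p + q), ((mvec p q (p + q) w i : ℤ) - ((i : ℕ) + 1 : ℤ)) =
      (invCount w : ℤ) + (p : ℤ) * q + ((p * (p - 1) / 2 : ℕ) : ℤ) := by
  classical
  set f : ℕ → ℤ := fun j =>
    (if h : j < q then ((Mnat w ⟨j, h⟩ : ℤ) + 1 + (p : ℤ)) else ((p : ℤ) + q)) - (j + 1)
    with hf
  have hstep : ∀ i : Fin (p + q),
      ((mvec p q (p + q) w i : ℤ) - ((i : ℕ) + 1 : ℤ)) = f (i : ℕ) := by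
    intro i
    by_cases h : (i : ℕ) < q
    · rw [mvec_eq_of_lt w p (p + q) i h, hf]
      simp only [h, dif_pos]
      push_cast
      ring
    · rw [hf]
      simp only [h, dif_neg, not_false_iff]
      rw [mvec, if_neg h]
      push_cast
      ring
  rw [Finset.sum_congr rfl (fun i _ => hstep i)]
  rw [Fin.sum_univ_eq_sum_range f (p + q), Nat.add_comm p q, Finset.sum_range_add f q p]
  have hpart1 : ∑ j ∈ Finset.range q, f j = (invCount w : ℤ) + (p : ℤ) * q := by
    rw [← Fin.sum_univ_eq_sum_range f q]
    have : ∀ j : Fin q, f (j : ℕ) =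
        ((Finset.univ.filter (fun b : Fin q => j < b ∧ w⁻¹ b < w⁻¹ j)).card : ℤ) + p := by
      intro j
      rw [hf]
      simp only [j.isLt, dif_pos, Fin.eta]
      have hc := card_count w j
      rw [filter_eq_of_avoid w hw j] at hc
      have : ((Finset.univ.filter (fun b : Fin q => j < b ∧ w⁻¹ b < w⁻¹ j)).card : ℤ)
          = (Mnat w j : ℤ) - (j : ℕ) := by
        have := hc
        omega
      rw [this]
      ring
    rw [Finset.sum_congr rfl (fun j _ => this j), Finset.sum_add_distrib]
    rw [← Nat.cast_sum, ← invCount_eq_sum w]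
    simp [mul_comm]
  have hpart2 : ∑ t ∈ Finset.range p, f (q + t) = ((p * (p - 1) / 2 : ℕ) : ℤ) := by
    have hcong : ∀ t ∈ Finset.range p, f (q + t) = ((p : ℤ) - 1 - t) := by
      intro t ht
      rw [hf]
      have : ¬ (q + t < q) := by omega
      simp only [this, dif_neg, not_false_iff]
      push_cast
      ring
    rw [Finset.sum_congr rfl hcong]
    have h2 : ∑ t ∈ Finset.range p, ((p : ℤ) - 1 - t) = ∑ t ∈ Finset.range p, (t : ℤ) := by
      rw [← Finset.sum_range_reflect (fun t => (t : ℤ)) p]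
      refine Finset.sum_congr rfl fun t ht => ?_
      rw [Finset.mem_range] at ht
      push_cast [Nat.cast_sub (by omega : t ≤ p - 1)]
      omega
    rw [h2, ← Nat.cast_sum, Finset.sum_range_id p]
  rw [hpart1, hpart2]
end
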